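/- A uniformly complete Archimedean vector lattice E with a strong unit is prime Noetherian if and only if every prime ideal of E is a maximal ideal. -/

import Mathlib

/-- An (order) ideal of the vector lattice `E`: a solid linear subspace. -/
def IsIdeal {E : Type*} [Lattice E] [AddCommGroup E] [Module ℝ E]
    (I : Submodule ℝ E) : Prop :=
  ∀ x y : E, |x| ≤ |y| → y ∈ I → x ∈ I

/-- A prime ideal: a proper ideal `P` such that `x ⊓ y ∈ P` implies `x ∈ P` or `y ∈ P`. -/
def IsPrimeIdeal {E : Type*} [Lattice E] [AddCommGroup E] [Module ℝ E]
    (P : Submodule ℝ E) : Prop :=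
  IsIdeal P ∧ P ≠ ⊤ ∧ ∀ x y : E, x ⊓ y ∈ P → x ∈ P ∨ y ∈ P

/-- A principal ideal: `I = {y : |y| ≤ c • x for some scalar c ≥ 0}` for some `x ≥ 0`. -/
def IsPrincipalIdeal {E : Type*} [Lattice E] [AddCommGroup E] [Module ℝ E]
    (I : Submodule ℝ E) : Prop :=
  ∃ x : E, 0 ≤ x ∧ ∀ y : E, y ∈ I ↔ ∃ c : ℝ, 0 ≤ c ∧ |y| ≤ c • x

/-- A maximal ideal: a proper ideal `M` such that any ideal between `M` and `E` equals `M` or `E`. -/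
def IsMaximalIdeal {E : Type*} [Lattice E] [AddCommGroup E] [Module ℝ E]
    (M : Submodule ℝ E) : Prop :=
  IsIdeal M ∧ M ≠ ⊤ ∧ ∀ J : Submodule ℝ E, IsIdeal J → M ≤ J → J = M ∨ J = ⊤

/-- An ideal `I` is order dense if its disjoint complement is trivial. -/
def IsOrderDense {E : Type*} [Lattice E] [AddCommGroup E] [Module ℝ E]
    (I : Submodule ℝ E) : Prop :=
  ∀ x : E, (∀ y ∈ I, |x| ⊓ |y| = 0) → x = 0

/-- `a` is an atom of the vector lattice `E`. -/
def IsAtomElem {E : Type*} [Lattice E] [AddCommGroup E] (a : E) : Prop :=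
  0 < a ∧ ∀ x y : E, 0 ≤ x → x ≤ a → 0 ≤ y → y ≤ a → x ⊓ y = 0 → x = 0 ∨ y = 0

/-- The vector lattice `E` is Archimedean. -/
def VLArchimedean (E : Type*) [Lattice E] [AddCommGroup E] : Prop :=
  ∀ x y : E, (∀ n : ℕ, n • x ≤ y) → x ≤ 0

/-- The vector lattice `E` is uniformly complete. -/
def UniformlyComplete (E : Type*) [Lattice E] [AddCommGroup E] [Module ℝ E] : Prop :=
  ∀ e : E, 0 ≤ e → ∀ x : ℕ → E,
    (∀ ε : ℝ, 0 < ε → ∃ N : ℕ, ∀ m n : ℕ, N ≤ m → N ≤ n → |x m - x n| ≤ ε • e) →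
    ∃ l : E, ∀ ε : ℝ, 0 < ε → ∃ N : ℕ, ∀ n : ℕ, N ≤ n → |x n - l| ≤ ε • e

/-- The vector lattice `E` has a strong unit. -/
def HasStrongUnit (E : Type*) [Lattice E] [AddCommGroup E] [Module ℝ E] : Prop :=
  ∃ e : E, 0 ≤ e ∧ ∀ x : E, ∃ c : ℝ, 0 < c ∧ |x| ≤ c • e

/-- The vector lattice `E` is prime Noetherian: every increasing sequence of
prime ideals is eventually constant. -/
def PrimeNoetherian (E : Type*) [Lattice E] [AddCommGroup E] [Module ℝ E] : Prop :=
  ∀ P : ℕ → Submodule ℝ E, (∀ n, IsPrimeIdeal (P n)) → Monotone P →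
    ∃ N : ℕ, ∀ n : ℕ, N ≤ n → P n = P N

set_option linter.unusedSectionVars false
section Aux
variable {E : Type*} [Lattice E] [AddCommGroup E] [Module ℝ E]
  [CovariantClass E E (· + ·) (· ≤ ·)] [PosSMulMono ℝ E]

lemma vl_smul_nonneg {c : ℝ} {x : E} (hc : 0 ≤ c) (hx : 0 ≤ x) : 0 ≤ c • x := by
  simpa using smul_le_smul_of_nonneg_left hx hc

lemma vl_smul_scalar_mono {c d : ℝ} {x : E} (h : c ≤ d) (hx : 0 ≤ x) : c • x ≤ d • x := by
  have h1 : 0 ≤ (d - c) • x := vl_smul_nonneg (by linarith) hx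
  have h2 := add_le_add_right h1 (c • x)
  calc c • x = c • x + 0 := by rw [add_zero]
    _ ≤ c • x + (d - c) • x := h2
    _ = d • x := by rw [← add_smul]; ring_nf

lemma vl_smul_nonpos {c : ℝ} {x : E} (hc : c ≤ 0) (hx : 0 ≤ x) : c • x ≤ 0 := by
  simpa using vl_smul_scalar_mono hc hx

lemma vl_smul_sup {c : ℝ} (hc : 0 < c) (x y : E) : c • (x ⊔ y) = c • x ⊔ c • y := by
  apply le_antisymm
  · have h1 : x ⊔ y ≤ c⁻¹ • (c • x ⊔ c • y) := by
      apply sup_le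
      · have := smul_le_smul_of_nonneg_left (le_sup_left : c • x ≤ c • x ⊔ c • y)
          (le_of_lt (inv_pos.2 hc))
        simpa [smul_smul, inv_mul_cancel₀ hc.ne'] using this
      · have := smul_le_smul_of_nonneg_left (le_sup_right : c • y ≤ c • x ⊔ c • y)
          (le_of_lt (inv_pos.2 hc))
        simpa [smul_smul, inv_mul_cancel₀ hc.ne'] using this
    have := smul_le_smul_of_nonneg_left h1 hc.le
    simpa [smul_smul, mul_inv_cancel₀ hc.ne'] using this
  · exact sup_le (smul_le_smul_of_nonneg_left le_sup_left hc.le)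
      (smul_le_smul_of_nonneg_left le_sup_right hc.le)

lemma vl_abs_smul (r : ℝ) (x : E) : |r • x| = |r| • |x| := by
  rcases lt_trichotomy r 0 with hr | hr | hr
  · rw [abs_of_neg hr]
    show (r • x) ⊔ -(r • x) = (-r) • (x ⊔ -x)
    rw [vl_smul_sup (by linarith), neg_smul, neg_smul, smul_neg, neg_neg, sup_comm]
  · simp [hr]
  · rw [abs_of_pos hr]
    show (r • x) ⊔ -(r • x) = r • (x ⊔ -x)
    rw [vl_smul_sup hr, smul_neg]

lemma vl_convex_le_sup {t : ℝ} (ht0 : 0 ≤ t) (ht1 : t ≤ 1) (x y : E) :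
    t • x + (1 - t) • y ≤ x ⊔ y := by
  have h1 : t • x ≤ t • (x ⊔ y) := smul_le_smul_of_nonneg_left le_sup_left ht0
  have h2 : (1 - t) • y ≤ (1 - t) • (x ⊔ y) :=
    smul_le_smul_of_nonneg_left le_sup_right (by linarith)
  calc t • x + (1 - t) • y ≤ t • (x ⊔ y) + (1 - t) • (x ⊔ y) := add_le_add h1 h2
    _ = x ⊔ y := by rw [← add_smul]; norm_num

lemma vl_inf_le_convex {t : ℝ} (ht0 : 0 ≤ t) (ht1 : t ≤ 1) (x y : E) :
    x ⊓ y ≤ t • x + (1 - t) • y := by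
  have h1 : t • (x ⊓ y) ≤ t • x := smul_le_smul_of_nonneg_left inf_le_left ht0
  have h2 : (1 - t) • (x ⊓ y) ≤ (1 - t) • y :=
    smul_le_smul_of_nonneg_left inf_le_right (by linarith)
  calc x ⊓ y = t • (x ⊓ y) + (1 - t) • (x ⊓ y) := by rw [← add_smul]; norm_num
    _ ≤ t • x + (1 - t) • y := add_le_add h1 h2

lemma vl_arch_le (harch : VLArchimedean E) {e a b : E} (he : 0 ≤ e)
    (h : ∀ ε : ℝ, 0 < ε → a ≤ b + ε • e) : a ≤ b := by
  have key : ∀ n : ℕ, n • (a - b) ≤ e := by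
    intro n
    rcases Nat.eq_zero_or_pos n with h0 | hn
    · simpa [h0] using he
    · have hpos : (0:ℝ) < (n:ℝ) := by exact_mod_cast hn
      have h1 := h ((n:ℝ)⁻¹) (inv_pos.2 hpos)
      have h2 : a - b ≤ (n:ℝ)⁻¹ • e := by
        have := sub_le_sub_right h1 b
        simpa [add_comm, add_sub_assoc] using this
      have h3 := smul_le_smul_of_nonneg_left h2 (le_of_lt hpos)
      rw [smul_smul, mul_inv_cancel₀ hpos.ne', one_smul] at h3
      calc n • (a - b) = (n:ℝ) • (a - b) := (Nat.cast_smul_eq_nsmul ℝ n (a-b)).symm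
        _ ≤ e := h3
  exact sub_nonpos.1 (harch (a - b) e key)

lemma vl_distrib_ineq (x y z : E) : (x ⊔ z) ⊓ (y ⊔ z) ≤ (x ⊓ y) ⊔ z := by
  letI := AddCommGroup.toDistribLattice E
  calc (x ⊔ z) ⊓ (y ⊔ z) = (z ⊔ x) ⊓ (z ⊔ y) := by rw [sup_comm z x, sup_comm z y]
    _ ≤ z ⊔ (x ⊓ y) := le_sup_inf
    _ = (x ⊓ y) ⊔ z := sup_comm _ _

lemma vl_posPart_inf (x : E) : (x ⊔ 0) ⊓ (-x ⊔ 0) = 0 := by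
  simpa [posPart_def, negPart_def] using posPart_inf_negPart_eq_zero x

lemma vl_sup_zero_add_le {x y : E} (hx : 0 ≤ x) (hy : 0 ≤ y) : x ⊔ y ≤ x + y :=
  sup_le (le_add_of_nonneg_right hy) (le_add_of_nonneg_left hx)
end Aux

section Ideals
variable {E : Type*} [Lattice E] [AddCommGroup E] [Module ℝ E]
  [CovariantClass E E (· + ·) (· ≤ ·)] [PosSMulMono ℝ E]

/-- The ideal generated by the ideal `P` and the element `v`. -/
def genIdeal (P : Submodule ℝ E) (hP : IsIdeal P) (v : E) : Submodule ℝ E where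
  carrier := {y | ∃ c : ℝ, 0 ≤ c ∧ (|y| - c • v) ⊔ 0 ∈ P}
  zero_mem' := ⟨0, le_refl 0, by simpa using P.zero_mem⟩
  add_mem' := by
    rintro a b ⟨c₁, hc₁, h₁⟩ ⟨c₂, hc₂, h₂⟩
    refine ⟨c₁ + c₂, by linarith, ?_⟩
    have hnn : (0:E) ≤ ((|a| - c₁ • v) ⊔ 0) + ((|b| - c₂ • v) ⊔ 0) :=
      add_nonneg le_sup_right le_sup_right
    have hkey : (|a + b| - (c₁ + c₂) • v) ⊔ 0 ≤ ((|a| - c₁ • v) ⊔ 0) + ((|b| - c₂ • v) ⊔ 0) := by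
      apply sup_le
      · have h3 : |a + b| - (c₁ + c₂) • v ≤ (|a| - c₁ • v) + (|b| - c₂ • v) := by
          have := abs_add_le a b
          have h4 : (|a| - c₁ • v) + (|b| - c₂ • v) = |a| + |b| - (c₁ + c₂) • v := by
            rw [add_smul]; abel
          rw [h4]
          exact sub_le_sub_right this _
        exact h3.trans (add_le_add le_sup_left le_sup_left)
      · exact hnn
    refine hP _ _ ?_ (P.add_mem h₁ h₂)
    rw [abs_of_nonneg (le_sup_right : (0:E) ≤ _), abs_of_nonneg hnn]
    exact hkey
  smul_mem' := by
    rintro r y ⟨c, hc, h⟩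
    rcases eq_or_ne r 0 with hr | hr
    · exact ⟨0, le_refl 0, by simpa [hr] using P.zero_mem⟩
    · have hrpos : 0 < |r| := abs_pos.2 hr
      refine ⟨|r| * c, mul_nonneg hrpos.le hc, ?_⟩
      have heq : (|r • y| - (|r| * c) • v) ⊔ 0 = |r| • ((|y| - c • v) ⊔ 0) := by
        rw [vl_abs_smul, mul_smul, ← smul_sub, vl_smul_sup hrpos, smul_zero]
      rw [heq]
      exact P.smul_mem _ h

lemma mem_genIdeal {P : Submodule ℝ E} {hP : IsIdeal P} {v y : E} :
    y ∈ genIdeal P hP v ↔ ∃ c : ℝ, 0 ≤ c ∧ (|y| - c • v) ⊔ 0 ∈ P := Iff.rfl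

lemma le_genIdeal {P : Submodule ℝ E} {hP : IsIdeal P} {v : E} : P ≤ genIdeal P hP v := by
  intro p hp
  refine ⟨0, le_refl 0, ?_⟩
  have : (|p| - (0:ℝ) • v) ⊔ 0 = |p| := by
    rw [zero_smul, sub_zero, sup_eq_left]
    exact abs_nonneg p
  rw [this]
  exact hP |p| p (by rw [abs_abs]) hp

lemma self_mem_genIdeal {P : Submodule ℝ E} {hP : IsIdeal P} {v : E} (hv : 0 ≤ v) :
    v ∈ genIdeal P hP v := by
  refine ⟨1, zero_le_one, ?_⟩
  rw [abs_of_nonneg hv, one_smul, sub_self, sup_idem]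
  exact P.zero_mem

lemma genIdeal_isIdeal {P : Submodule ℝ E} {hP : IsIdeal P} {v : E} :
    IsIdeal (genIdeal P hP v) := by
  rintro x y hxy ⟨c, hc, h⟩
  refine ⟨c, hc, ?_⟩
  refine hP _ _ ?_ h
  rw [abs_of_nonneg (le_sup_right : (0:E) ≤ _), abs_of_nonneg (le_sup_right : (0:E) ≤ _)]
  exact sup_le_sup_right (sub_le_sub_right hxy _) 0

lemma genIdeal_mono {P : Submodule ℝ E} {hP : IsIdeal P} {v v' : E} (hvv' : v ≤ v') :
    genIdeal P hP v ≤ genIdeal P hP v' := by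
  rintro y ⟨c, hc, h⟩
  refine ⟨c, hc, ?_⟩
  refine hP _ _ ?_ h
  rw [abs_of_nonneg (le_sup_right : (0:E) ≤ _), abs_of_nonneg (le_sup_right : (0:E) ≤ _)]
  exact sup_le_sup_right (sub_le_sub_left (smul_le_smul_of_nonneg_left hvv' hc) _) 0

lemma vl_decomp (x y : E) : x = x ⊓ y + ((x - y) ⊔ 0) := by
  have h : x - x ⊓ y = (x - y) ⊔ 0 := by
    rw [sub_inf, sub_self, sup_comm]
  exact (sub_eq_iff_eq_add'.1 h)

lemma prime_of_between {P I : Submodule ℝ E} (hP : IsPrimeIdeal P) (hI : IsIdeal I)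
    (hPI : P ≤ I) (hItop : I ≠ ⊤) : IsPrimeIdeal I := by
  refine ⟨hI, hItop, ?_⟩
  intro x y hxy
  have hsplit := hP.2.2 ((x - y) ⊔ 0) ((y - x) ⊔ 0) ?_
  · rcases hsplit with h | h
    · left
      have hx : x = x ⊓ y + ((x - y) ⊔ 0) := vl_decomp x y
      rw [hx]
      exact I.add_mem hxy (hPI h)
    · right
      have hy : y = x ⊓ y + ((y - x) ⊔ 0) := by rw [inf_comm]; exact vl_decomp y x
      rw [hy]
      exact I.add_mem hxy (hPI h)
  · have : ((x - y) ⊔ 0) ⊓ ((y - x) ⊔ 0) = 0 := by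
      have := vl_posPart_inf (x - y)
      rwa [neg_sub] at this
    rw [this]
    exact P.zero_mem

lemma top_of_unit_mem {I : Submodule ℝ E} (hI : IsIdeal I) {e : E} (he : 0 ≤ e)
    (hsu : ∀ x : E, ∃ c : ℝ, 0 < c ∧ |x| ≤ c • e) (heI : e ∈ I) : I = ⊤ := by
  rw [Submodule.eq_top_iff']
  intro x
  obtain ⟨c, hc, hx⟩ := hsu x
  refine hI x (c • e) ?_ (I.smul_mem c heI)
  rwa [abs_of_nonneg (vl_smul_nonneg hc.le he)]
end Ideals

section Sqrt
variable {E : Type*} [Lattice E] [AddCommGroup E] [Module ℝ E]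
  [CovariantClass E E (· + ·) (· ≤ ·)] [PosSMulMono ℝ E]

/-- Tangent line from above to the square-root function, evaluated on `v`. -/
noncomputable def sqLine (e v : E) (r : ℝ) : E := (1/(2*r)) • v + (r/2) • e

lemma sqLine_lower {e v : E} (he : 0 ≤ e) (hv : 0 ≤ v) {r s : ℝ} (hr : 0 < r) (hs : 0 < s) :
    ((1/s) • v) ⊓ (s • e) ≤ sqLine e v r := by
  by_cases hcase : s ≤ 2*r
  · set t := s/(2*r) with ht
    have ht0 : 0 ≤ t := by positivity
    have ht1 : t ≤ 1 := by rw [ht, div_le_one (by linarith)]; linarith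
    have step := vl_inf_le_convex ht0 ht1 ((1/s) • v) (s • e)
    refine step.trans ?_
    unfold sqLine
    apply add_le_add
    · have : t • ((1/s) • v) = (1/(2*r)) • v := by
        rw [smul_smul, ht]
        congr 1
        field_simp
      exact this.le
    · have heq : (1 - t) • (s • e) = ((1 - t) * s) • e := by rw [smul_smul]
      rw [heq]
      apply vl_smul_scalar_mono _ he
      rw [ht]
      have hkey : r/2 - (1 - s/(2*r))*s = (r-s)^2/(2*r) := by
        field_simp
        ring
      have hpos : (0:ℝ) ≤ (r-s)^2/(2*r) := by positivity
      linarith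
  · push_neg at hcase
    refine le_trans inf_le_left ?_
    unfold sqLine
    refine le_trans ?_ (le_add_of_nonneg_right (vl_smul_nonneg (by positivity) he))
    apply vl_smul_scalar_mono _ hv
    rw [div_le_div_iff₀ hs (by positivity)]
    linarith

lemma sqLine_err {e v : E} (he : 0 ≤ e) (hv : 0 ≤ v) {r r' : ℝ} (h0 : 0 < r') (hrr : r' ≤ r) :
    sqLine e v r ≤ sqLine e v r' + ((r - r')/2) • e := by
  unfold sqLine
  have h1 : (1/(2*r)) • v ≤ (1/(2*r')) • v := by
    apply vl_smul_scalar_mono _ hv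
    apply div_le_div_of_nonneg_left one_pos.le (by positivity)
    linarith
  have h2 : (r/2) • e = (r'/2) • e + ((r - r')/2) • e := by
    rw [← add_smul]; ring_nf
  calc (1/(2*r)) • v + (r/2) • e ≤ (1/(2*r')) • v + ((r'/2) • e + ((r - r')/2) • e) := by
        rw [← h2]; exact add_le_add_left h1 _
    _ = (1/(2*r')) • v + (r'/2) • e + ((r - r')/2) • e := by abel

lemma sqrt_exists (harch : VLArchimedean E) (huc : UniformlyComplete E) {e v : E}
    (he : 0 ≤ e) (hv : 0 ≤ v) (hve : v ≤ e) :
    ∃ w : E, v ≤ w ∧ w ≤ e ∧ (∀ s : ℝ, 0 < s → ((1/s) • v) ⊓ (s • e) ≤ w) ∧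
      (∀ r : ℝ, 0 < r → r ≤ 1 → w ≤ (1/(2*r)) • v + (r/2) • e) := by
  set x : ℕ → E := fun k =>
    (Finset.range (2^k)).inf' ⟨0, Finset.mem_range.2 (by positivity)⟩
      (fun i => sqLine e v (((i:ℝ)+1)/2^k)) with hx
  have hgrid : ∀ k : ℕ, ∀ i ∈ Finset.range (2^k),
      (0:ℝ) < ((i:ℝ)+1)/2^k ∧ ((i:ℝ)+1)/2^k ≤ 1 := by
    intro k i hi
    have hik : (i:ℝ) + 1 ≤ 2^k := by
      have := Finset.mem_range.1 hi
      have : (i:ℝ) + 1 ≤ (2^k : ℕ) := by exact_mod_cast Nat.succ_le_of_lt this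
      simpa using this
    constructor
    · positivity
    · rw [div_le_one (by positivity)]; exact hik
  have factA : ∀ k : ℕ, ∀ r' : ℝ, 0 < r' → r' ≤ 1 →
      x k ≤ sqLine e v r' + ((1:ℝ)/2^(k+1)) • e := by
    intro k r' h0 h1
    have hpos : (0:ℝ) < r' * 2^k := by positivity
    have hceil : 1 ≤ ⌈r' * 2^k⌉₊ := Nat.ceil_pos.2 hpos
    set i := ⌈r' * 2^k⌉₊ - 1 with hi
    have hi1 : i + 1 = ⌈r' * 2^k⌉₊ := Nat.succ_pred_eq_of_pos hceil
    have hmem : i ∈ Finset.range (2^k) := by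
      rw [Finset.mem_range]
      have : ⌈r' * 2^k⌉₊ ≤ 2^k := by
        apply Nat.ceil_le.2
        calc r' * 2^k ≤ 1 * 2^k := by
              apply mul_le_mul_of_nonneg_right h1 (by positivity)
          _ = ((2^k : ℕ) : ℝ) := by push_cast; ring
      omega
    set r : ℝ := ((i:ℝ)+1)/2^k with hr
    have hrr' : r' ≤ r := by
      rw [hr, le_div_iff₀ (by positivity : (0:ℝ) < 2^k)]
      have : ((i:ℝ) + 1) = (⌈r' * 2^k⌉₊ : ℝ) := by exact_mod_cast congrArg (Nat.cast (R := ℝ)) hi1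
      rw [this]
      exact Nat.le_ceil _
    have hrub : r ≤ r' + 1/2^k := by
      rw [hr, div_le_iff₀ (by positivity : (0:ℝ) < 2^k)]
      have h2 : ((i:ℝ) + 1) = (⌈r' * 2^k⌉₊ : ℝ) := by exact_mod_cast congrArg (Nat.cast (R := ℝ)) hi1
      rw [h2]
      have h3 : (⌈r' * 2^k⌉₊ : ℝ) < r' * 2^k + 1 := Nat.ceil_lt_add_one hpos.le
      calc (⌈r' * 2^k⌉₊ : ℝ) ≤ r' * 2^k + 1 := h3.le
        _ = (r' + 1/2^k) * 2^k := by field_simp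
    have step1 : x k ≤ sqLine e v r := Finset.inf'_le _ hmem
    have step2 : sqLine e v r ≤ sqLine e v r' + ((r - r')/2) • e := sqLine_err he hv h0 hrr'
    refine (step1.trans step2).trans (add_le_add_right ?_ _)
    have hsc : (r - r')/2 ≤ 1/2^(k+1) := by
      have h4 : r - r' ≤ 1/2^k := by linarith
      have h5 : (1:ℝ)/2^(k+1) = (1/2^k)/2 := by
        rw [pow_succ]; ring
      rw [h5]
      linarith
    exact vl_smul_scalar_mono hsc he
  have factB : ∀ k j : ℕ, x k ≤ x j + ((1:ℝ)/2^(k+1)) • e := by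
    intro k j
    have : x k - ((1:ℝ)/2^(k+1)) • e ≤ x j := by
      apply Finset.le_inf'
      intro i hi
      obtain ⟨h0, h1⟩ := hgrid j i hi
      exact sub_le_iff_le_add.2 (factA k _ h0 h1)
    exact sub_le_iff_le_add.1 this
  have hpow : ∀ a b : ℕ, a ≤ b → (1:ℝ)/2^b ≤ (1/2)^a := by
    intro a b hab
    rw [← one_div_pow]
    exact pow_le_pow_of_le_one (by norm_num) (by norm_num) hab
  have hcauchy : ∀ ε : ℝ, 0 < ε → ∃ N : ℕ, ∀ m n : ℕ, N ≤ m → N ≤ n → |x m - x n| ≤ ε • e := by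
    intro ε hε
    obtain ⟨N, hN⟩ := exists_pow_lt_of_lt_one hε (by norm_num : (1/2:ℝ) < 1)
    refine ⟨N, ?_⟩
    have key : ∀ a b : ℕ, N ≤ a → x a - x b ≤ ε • e := by
      intro a b ha
      have h2 : x a - x b ≤ ((1:ℝ)/2^(a+1)) • e := by
        rw [sub_le_iff_le_add, add_comm]
        exact factB a b
      refine h2.trans (vl_smul_scalar_mono ?_ he)
      calc (1:ℝ)/2^(a+1) ≤ (1/2)^N := hpow N (a+1) (by omega)
        _ ≤ ε := hN.le
    intro m n hm hn
    rw [abs_le']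
    exact ⟨key m n hm, by simpa [neg_sub] using key n m hn⟩
  obtain ⟨w, hw⟩ := huc e he x hcauchy
  have hupper : ∀ r : ℝ, 0 < r → r ≤ 1 → w ≤ sqLine e v r := by
    intro r h0 h1
    apply vl_arch_le harch (e := e) he
    intro ε hε
    obtain ⟨N, hN⟩ := hw (ε/2) (by linarith)
    obtain ⟨M, hM⟩ := exists_pow_lt_of_lt_one (show (0:ℝ) < ε/2 by linarith)
      (by norm_num : (1/2:ℝ) < 1)
    set n := max N M with hn
    have h2 : |x n - w| ≤ (ε/2) • e := hN n (le_max_left _ _)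
    have h3 : w - x n ≤ (ε/2) • e := by
      have := (abs_le'.1 h2).2
      rwa [neg_sub] at this
    have h4 := factA n r h0 h1
    have h5 : (1:ℝ)/2^(n+1) ≤ ε/2 := by
      calc (1:ℝ)/2^(n+1) ≤ (1/2)^M := hpow M (n+1) (by omega)
        _ ≤ ε/2 := hM.le
    have h6 : ((1:ℝ)/2^(n+1)) • e ≤ (ε/2) • e := vl_smul_scalar_mono h5 he
    have heq : (ε/2) • e + (ε/2) • e = ε • e := by rw [← add_smul]; ring_nf
    calc w = (w - x n) + x n := by abel
      _ ≤ (ε/2) • e + (sqLine e v r + ((1:ℝ)/2^(n+1)) • e) := add_le_add h3 h4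
      _ = sqLine e v r + ((ε/2) • e + ((1:ℝ)/2^(n+1)) • e) := by abel
      _ ≤ sqLine e v r + ((ε/2) • e + (ε/2) • e) := add_le_add_right (add_le_add_right h6 _) _
      _ = sqLine e v r + ε • e := by rw [heq]
  have hlower : ∀ s : ℝ, 0 < s → ((1/s) • v) ⊓ (s • e) ≤ w := by
    intro s hs
    apply vl_arch_le harch (e := e) he
    intro ε hε
    obtain ⟨N, hN⟩ := hw ε hε
    have h2 := hN N le_rfl
    have h3 : x N - w ≤ ε • e := (abs_le'.1 h2).1
    have h4 : ((1/s) • v) ⊓ (s • e) ≤ x N :=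
      Finset.le_inf' _ _ (fun i hi => sqLine_lower he hv (hgrid N i hi).1 hs)
    calc ((1/s) • v) ⊓ (s • e) ≤ x N := h4
      _ = (x N - w) + w := by abel
      _ ≤ ε • e + w := add_le_add_left h3 _
      _ = w + ε • e := by abel
  refine ⟨w, ?_, ?_, hlower, fun r h0 h1 => hupper r h0 h1⟩
  · have := hlower 1 one_pos
    rw [show (1:ℝ)/1 = 1 by norm_num, one_smul, one_smul, inf_eq_left.2 hve] at this
    exact this
  · have := hupper 1 one_pos le_rfl
    unfold sqLine at this
    rw [show (1:ℝ)/(2*1) = 1/2 by norm_num, show (1:ℝ)/2 = 1/2 by norm_num] at this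
    refine this.trans ?_
    have h1 : ((1:ℝ)/2) • v ≤ ((1:ℝ)/2) • e := smul_le_smul_of_nonneg_left hve (by norm_num)
    calc ((1:ℝ)/2) • v + ((1:ℝ)/2) • e ≤ ((1:ℝ)/2) • e + ((1:ℝ)/2) • e := add_le_add_left h1 _
      _ = e := by rw [← add_smul]; norm_num
end Sqrt

section Main
variable {E : Type*} [Lattice E] [AddCommGroup E] [Module ℝ E]
  [CovariantClass E E (· + ·) (· ≤ ·)] [PosSMulMono ℝ E]

lemma genIdeal_ne_top_aux {P J : Submodule ℝ E} (hP : IsPrimeIdeal P) (hJ : IsIdeal J)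
    (hJtop : J ≠ ⊤) (hPJ : P ≤ J) {e u vn : E} (he : 0 ≤ e)
    (hsu' : ∀ x : E, ∃ c : ℝ, 0 < c ∧ |x| ≤ c • e) (huJ : u ∈ J) (hu0 : 0 ≤ u)
    (hbound : ∀ ε : ℝ, 0 < ε → ∃ K : ℝ, 0 ≤ K ∧ vn ≤ ε • e + K • u) :
    e ∉ genIdeal P hP.1 vn := by
  rintro ⟨c, hc, hmem⟩
  rw [abs_of_nonneg he] at hmem
  set p := (e - c • vn) ⊔ 0 with hp
  have hp0 : (0:E) ≤ p := le_sup_right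
  obtain ⟨K, hK, hb⟩ := hbound (1/(2*(c+1))) (by positivity)
  have h1 : e ≤ p + c • vn := by
    have : e - c • vn ≤ p := le_sup_left
    exact sub_le_iff_le_add.1 this
  have h2 : c • vn ≤ (c * (1/(2*(c+1)))) • e + (c * K) • u := by
    have := smul_le_smul_of_nonneg_left hb hc
    rwa [smul_add, smul_smul, smul_smul] at this
  have h3 : (c * (1/(2*(c+1)))) • e ≤ ((1:ℝ)/2) • e := by
    apply vl_smul_scalar_mono _ he
    rw [mul_one_div, div_le_div_iff₀ (by positivity) (by norm_num)]
    linarith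
  have h4 : e ≤ p + ((1:ℝ)/2) • e + (c * K) • u := by
    calc e ≤ p + ((c * (1/(2*(c+1)))) • e + (c * K) • u) := h1.trans (add_le_add_right h2 _)
      _ ≤ p + (((1:ℝ)/2) • e + (c * K) • u) := add_le_add_right (add_le_add_left h3 _) _
      _ = p + ((1:ℝ)/2) • e + (c * K) • u := by abel
  have h5 : ((1:ℝ)/2) • e ≤ p + (c * K) • u := by
    have h6 : e - ((1:ℝ)/2) • e = ((1:ℝ)/2) • e := by
      rw [show e - ((1:ℝ)/2) • e = (1:ℝ) • e - ((1:ℝ)/2) • e by rw [one_smul], ← sub_smul]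
      norm_num
    have := sub_le_sub_right h4 (((1:ℝ)/2) • e)
    rw [h6] at this
    calc ((1:ℝ)/2) • e ≤ p + ((1:ℝ)/2) • e + (c * K) • u - ((1:ℝ)/2) • e := this
      _ = p + (c * K) • u := by abel
  have h7 : e ≤ (2:ℝ) • (p + (c * K) • u) := by
    have := smul_le_smul_of_nonneg_left h5 (by norm_num : (0:ℝ) ≤ 2)
    rwa [smul_smul, show (2:ℝ) * (1/2) = 1 by norm_num, one_smul] at this
  have hmemJ : (2:ℝ) • (p + (c * K) • u) ∈ J := J.smul_mem _ (J.add_mem (hPJ hmem) (J.smul_mem _ huJ))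
  have hrhs0 : (0:E) ≤ (2:ℝ) • (p + (c * K) • u) :=
    vl_smul_nonneg (by norm_num) (add_nonneg hp0 (vl_smul_nonneg (mul_nonneg hc hK) hu0))
  have heJ : e ∈ J := hJ e _ (by rw [abs_of_nonneg he, abs_of_nonneg hrhs0]; exact h7) hmemJ
  exact hJtop (top_of_unit_mem hJ he hsu' heJ)

lemma sqrt_not_in_genIdeal {P : Submodule ℝ E} (hP : IsPrimeIdeal P) {e v w : E}
    (he : 0 ≤ e) (hv : 0 ≤ v) (hw0 : 0 ≤ w) (hvP : v ∉ P)
    (heP : e ∉ genIdeal P hP.1 v)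
    (hwlow : ∀ s : ℝ, 0 < s → ((1/s) • v) ⊓ (s • e) ≤ w) :
    w ∉ genIdeal P hP.1 v := by
  rintro ⟨c₀, hc₀, hq₀⟩
  rw [abs_of_nonneg hw0] at hq₀
  set C := max c₀ 1 with hC
  have hC1 : (1:ℝ) ≤ C := le_max_right _ _
  have hC0 : (0:ℝ) < C := lt_of_lt_of_le one_pos hC1
  set q := (w - C • v) ⊔ 0 with hq
  have hq0 : (0:E) ≤ q := le_sup_right
  have hqP : q ∈ P := by
    refine hP.1 _ _ ?_ hq₀
    rw [abs_of_nonneg (le_sup_right : (0:E) ≤ _), abs_of_nonneg (le_sup_right : (0:E) ≤ _)]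
    refine sup_le_sup_right (sub_le_sub_left ?_ _) 0
    exact vl_smul_scalar_mono (le_max_left _ _) hv
  set δ : ℝ := 1/(8*C^2) with hδ
  have hδ0 : (0:ℝ) < δ := by positivity
  -- lower bound for w
  have hlow := hwlow (1/(2*C)) (by positivity)
  have hlow' : ((2*C) • v) ⊓ ((1/(2*C)) • e) ≤ w := by
    have : (1:ℝ)/(1/(2*C)) = 2*C := by field_simp
    rwa [this] at hlow
  have hXY : (C • v) ⊓ ((1/(2*C)) • e - C • v) ≤ q := by
    have h1 := sub_le_sub_right hlow' (C • v)
    rw [inf_sub] at h1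
    have h2 : (2*C) • v - C • v = C • v := by
      rw [← sub_smul]; ring_nf
    rw [h2] at h1
    exact h1.trans le_sup_left
  -- prime split
  set a := (δ • e - v) ⊔ 0 with ha
  set b := (v - δ • e) ⊔ 0 with hb
  have hab : a ⊓ b = 0 := by
    have := vl_posPart_inf (δ • e - v)
    rwa [neg_sub] at this
  rcases hP.2.2 a b (by rw [hab]; exact P.zero_mem) with haP | hbP
  · -- a ∈ P : contradiction with e ∉ genIdeal
    apply heP
    refine ⟨1/δ, by positivity, ?_⟩
    rw [abs_of_nonneg he]
    refine hP.1 _ ((1/δ) • a) ?_ (P.smul_mem _ haP)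
    have ha0 : (0:E) ≤ (1/δ) • a := vl_smul_nonneg (by positivity) le_sup_right
    rw [abs_of_nonneg (le_sup_right : (0:E) ≤ _), abs_of_nonneg ha0]
    apply sup_le _ ha0
    have h1 : δ • e - v ≤ a := le_sup_left
    have := smul_le_smul_of_nonneg_left h1 (by positivity : (0:ℝ) ≤ 1/δ)
    rwa [smul_sub, smul_smul, show (1/δ) * δ = 1 by field_simp, one_smul] at this
  · -- b ∈ P : derive v ∈ P
    apply hvP
    set X := C • v with hX
    set Y := (1/(2*C)) • e - C • v with hY
    set B := v - δ • e with hB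
    set m := v ⊓ (δ • e) with hm
    set p := (4*δ) • e - v with hpp
    -- m ≤ X ⊔ (B ⊔ 0)
    have hi1 : m ≤ X ⊔ (B ⊔ 0) := by
      have : v ≤ C • v := by
        have := vl_smul_scalar_mono hC1 hv
        rwa [one_smul] at this
      exact le_trans (le_trans inf_le_left this) le_sup_left
    -- p ≤ C•p ⊔ 0
    have hpCp : p ≤ (C • p) ⊔ 0 := by
      have ht0 : (0:ℝ) ≤ 1/C := by positivity
      have ht1 : (1:ℝ)/C ≤ 1 := by
        rw [div_le_one hC0]; exact hC1
      have hcvx := vl_convex_le_sup ht0 ht1 ((C-1) • p) (-p)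
      have hcoeff : (1/C) * (C-1) = 1 - 1/C := by
        field_simp
      have hzero : (1/C) • ((C-1) • p) + (1 - 1/C) • (-p) = 0 := by
        rw [smul_smul, hcoeff, smul_neg]
        abel
      have h0le : (0:E) ≤ ((C-1) • p) ⊔ (-p) := by rw [← hzero]; exact hcvx
      have hrw : ((C • p) ⊔ 0) - p = ((C-1) • p) ⊔ (-p) := by
        rw [sup_sub (C • p) 0 p, zero_sub, sub_smul, one_smul]
      rw [← hrw] at h0le
      exact sub_nonneg.1 h0le
    have hYCp : Y = C • p := by
      rw [hY, hpp, smul_sub, smul_smul]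
      congr 2
      rw [hδ]
      field_simp
      ring
    -- m ≤ Y ⊔ (B ⊔ 0)
    have hi2 : m ≤ Y ⊔ (B ⊔ 0) := by
      have hsum : p + B = (3*δ) • e := by
        rw [hpp, hB]
        rw [show (3*δ) • e = (4*δ) • e - δ • e by rw [← sub_smul]; ring_nf]
        abel
      have hcvx := vl_convex_le_sup (by norm_num : (0:ℝ) ≤ 1/2) (by norm_num : (1:ℝ)/2 ≤ 1) p B
      have h3 : ((3*δ)/2) • e ≤ p ⊔ B := by
        have e1 : ((3*δ)/2) • e = ((1:ℝ)/2) • (p + B) := by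
          rw [hsum, smul_smul]
          congr 1
          ring
        have e2 : ((1:ℝ)/2) • (p + B) = ((1:ℝ)/2) • p + ((1:ℝ) - 1/2) • B := by
          rw [smul_add]
          norm_num
        rw [e1, e2]
        exact hcvx
      have h4 : m ≤ ((3*δ)/2) • e := by
        refine le_trans inf_le_right (vl_smul_scalar_mono ?_ he)
        linarith
      have h5 : p ⊔ B ≤ (Y ⊔ 0) ⊔ B := by
        apply sup_le_sup_right
        rw [hYCp]
        exact hpCp
      refine (h4.trans h3).trans (h5.trans ?_)
      rw [sup_assoc, sup_comm (0:E) B]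
    -- combine with distributivity
    have hmq : m ≤ ((X ⊓ Y) ⊔ 0) + b := by
      have hcomb : m ≤ (X ⊓ Y) ⊔ (B ⊔ 0) := le_trans (le_inf hi1 hi2) (vl_distrib_ineq X Y (B ⊔ 0))
      refine hcomb.trans (sup_le ?_ ?_)
      · exact le_add_of_nonneg_right le_sup_right |>.trans' le_sup_left
      · exact le_add_of_nonneg_left le_sup_right
    have hXYq : (X ⊓ Y) ⊔ 0 ≤ q := sup_le hXY hq0
    have hmqb : m ≤ q + b := hmq.trans (add_le_add_left hXYq _)
    have hvd : v = m + b := vl_decomp v (δ • e)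
    have hvle : v ≤ q + b + b := by
      rw [hvd]
      exact add_le_add_left hmqb _
    have hsumP : q + b + b ∈ P := P.add_mem (P.add_mem hqP hbP) hbP
    refine hP.1 v (q + b + b) ?_ hsumP
    have hrhs0 : (0:E) ≤ q + b + b := add_nonneg (add_nonneg hq0 le_sup_right) le_sup_right
    rw [abs_of_nonneg hv, abs_of_nonneg hrhs0]
    exact hvle
end Main

section Final
variable {E : Type*} [Lattice E] [AddCommGroup E] [Module ℝ E]
  [CovariantClass E E (· + ·) (· ≤ ·)] [PosSMulMono ℝ E]

open Classical in
noncomputable def sqrtStep (harch : VLArchimedean E) (huc : UniformlyComplete E) {e : E}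
    (he : 0 ≤ e) : E → E := fun z =>
  if h : 0 ≤ z ∧ z ≤ e then Classical.choose (sqrt_exists harch huc he h.1 h.2) else 0

open Classical in
lemma sqrtStep_spec (harch : VLArchimedean E) (huc : UniformlyComplete E) {e : E}
    (he : 0 ≤ e) {z : E} (h : 0 ≤ z ∧ z ≤ e) :
    z ≤ sqrtStep harch huc he z ∧ sqrtStep harch huc he z ≤ e ∧
      (∀ s : ℝ, 0 < s → ((1/s) • z) ⊓ (s • e) ≤ sqrtStep harch huc he z) ∧
      (∀ r : ℝ, 0 < r → r ≤ 1 →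
        sqrtStep harch huc he z ≤ (1/(2*r)) • z + (r/2) • e) := by
  have hTz : sqrtStep harch huc he z = Classical.choose (sqrt_exists harch huc he h.1 h.2) := by
    unfold sqrtStep
    rw [dif_pos h]
  rw [hTz]
  exact Classical.choose_spec (sqrt_exists harch huc he h.1 h.2)
end Final

theorem statement12 (E : Type*) [Lattice E] [AddCommGroup E] [Module ℝ E]
    [CovariantClass E E (· + ·) (· ≤ ·)] [PosSMulMono ℝ E]
    (harch : VLArchimedean E) (huc : UniformlyComplete E) (hsu : HasStrongUnit E) :
    PrimeNoetherian E ↔ ∀ P : Submodule ℝ E, IsPrimeIdeal P → IsMaximalIdeal P := by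
  obtain ⟨e, he0, hsu'⟩ := hsu
  constructor
  · intro hN P hP
    by_contra hmax
    have hJex : ∃ J : Submodule ℝ E, IsIdeal J ∧ P ≤ J ∧ J ≠ P ∧ J ≠ ⊤ := by
      have h1 : ¬ ∀ J : Submodule ℝ E, IsIdeal J → P ≤ J → J = P ∨ J = ⊤ :=
        fun h => hmax ⟨hP.1, hP.2.1, h⟩
      push_neg at h1
      obtain ⟨J, hJ1, hJ2, hJ3⟩ := h1
      exact ⟨J, hJ1, hJ2, hJ3.1, hJ3.2⟩
    obtain ⟨J, hJid, hPJ, hJP, hJtop⟩ := hJex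
    obtain ⟨y, hyJ, hyP⟩ : ∃ y, y ∈ J ∧ y ∉ P := by
      by_contra h
      push_neg at h
      exact hJP (le_antisymm (fun z hz => h z hz) hPJ)
    obtain ⟨c, hc, hyc⟩ := hsu' y
    set u := (1/c) • |y| with hu
    have hu0 : 0 ≤ u := vl_smul_nonneg (by positivity) (abs_nonneg y)
    have hue : u ≤ e := by
      have := smul_le_smul_of_nonneg_left hyc (by positivity : (0:ℝ) ≤ 1/c)
      rw [smul_smul, one_div_mul_cancel hc.ne', one_smul] at this
      exact this
    have huJ : u ∈ J := J.smul_mem _ (hJid |y| y (by rw [abs_abs]) hyJ)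
    have huP : u ∉ P := by
      intro hmem
      apply hyP
      refine hP.1 y (c • u) ?_ (P.smul_mem c hmem)
      rw [hu, smul_smul, mul_one_div, div_self hc.ne', one_smul, abs_abs]
    set T : E → E := sqrtStep harch huc he0 with hT
    set seq : ℕ → E := fun n => T^[n] u with hseq
    have hseq_succ : ∀ n, seq (n+1) = T (seq n) := fun n => Function.iterate_succ_apply' T n u
    have hinv : ∀ n, 0 ≤ seq n ∧ seq n ≤ e := by
      intro n
      induction n with
      | zero => exact ⟨hu0, hue⟩
      | succ k ih =>
        rw [hseq_succ]
        obtain ⟨h1, h2, _, _⟩ := sqrtStep_spec harch huc he0 ih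
        exact ⟨le_trans ih.1 h1, h2⟩
    have hmono : ∀ n, seq n ≤ seq (n+1) := by
      intro n
      rw [hseq_succ]
      exact (sqrtStep_spec harch huc he0 (hinv n)).1
    have humem : ∀ n, u ≤ seq n := by
      intro n
      induction n with
      | zero => exact le_refl _
      | succ k ih => exact ih.trans (hmono k)
    have hseqP : ∀ n, seq n ∉ P := by
      intro n hmem
      exact huP (hP.1 u (seq n)
        (by rw [abs_of_nonneg hu0, abs_of_nonneg (hinv n).1]; exact humem n) hmem)
    have hbound : ∀ n, ∀ ε : ℝ, 0 < ε → ∃ K : ℝ, 0 ≤ K ∧ seq n ≤ ε • e + K • u := by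
      intro n
      induction n with
      | zero =>
        intro ε hε
        refine ⟨1, zero_le_one, ?_⟩
        rw [one_smul]
        exact le_add_of_nonneg_left (vl_smul_nonneg hε.le he0)
      | succ k ih =>
        intro ε hε
        set r := min 1 ε with hr
        have hr0 : 0 < r := lt_min one_pos hε
        have hr1 : r ≤ 1 := min_le_left _ _
        have hrε : r ≤ ε := min_le_right _ _
        obtain ⟨K', hK', hb'⟩ := ih (ε * r) (by positivity)
        refine ⟨K'/(2*r), by positivity, ?_⟩
        rw [hseq_succ]
        have h1 := (sqrtStep_spec harch huc he0 (hinv k)).2.2.2 r hr0 hr1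
        have h2 : (1/(2*r)) • seq k ≤ (ε/2) • e + (K'/(2*r)) • u := by
          have h3 := smul_le_smul_of_nonneg_left hb' (by positivity : (0:ℝ) ≤ 1/(2*r))
          rw [smul_add, smul_smul, smul_smul] at h3
          have e1 : (1/(2*r)) * (ε * r) = ε/2 := by
            field_simp
          have e2 : (1/(2*r)) * K' = K'/(2*r) := by ring
          rwa [e1, e2] at h3
        have h4 : (r/2) • e ≤ (ε/2) • e := vl_smul_scalar_mono (by linarith) he0
        calc T (seq k) ≤ (1/(2*r)) • seq k + (r/2) • e := h1
          _ ≤ ((ε/2) • e + (K'/(2*r)) • u) + (ε/2) • e := add_le_add h2 h4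
          _ = (ε/2 + ε/2) • e + (K'/(2*r)) • u := by rw [add_smul]; abel
          _ = ε • e + (K'/(2*r)) • u := by rw [show ε/2 + ε/2 = ε by ring]
    set R : ℕ → Submodule ℝ E := fun n => genIdeal P hP.1 (seq n) with hR
    have hRe : ∀ n, e ∉ R n := fun n =>
      genIdeal_ne_top_aux hP hJid hJtop hPJ he0 hsu' huJ hu0 (hbound n)
    have hRtop : ∀ n, R n ≠ ⊤ := by
      intro n h
      exact hRe n (by rw [h]; exact Submodule.mem_top)
    have hRprime : ∀ n, IsPrimeIdeal (R n) :=
      fun n => prime_of_between hP genIdeal_isIdeal le_genIdeal (hRtop n)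
    have hRmono : Monotone R := monotone_nat_of_le_succ (fun n => genIdeal_mono (hmono n))
    obtain ⟨N, hNc⟩ := hN R hRprime hRmono
    have h1 : seq (N+1) ∈ R (N+1) := self_mem_genIdeal (hinv (N+1)).1
    have h2 : seq (N+1) ∉ R N := by
      rw [hseq_succ]
      exact sqrt_not_in_genIdeal hP he0 (hinv N).1
        (le_trans (hinv N).1 (sqrtStep_spec harch huc he0 (hinv N)).1) (hseqP N) (hRe N)
        (sqrtStep_spec harch huc he0 (hinv N)).2.2.1
    rw [hNc (N+1) (Nat.le_succ N)] at h1
    exact h2 h1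
  · intro hmax Pseq hPs hm
    refine ⟨0, fun n _ => ?_⟩
    have h0 := hmax (Pseq 0) (hPs 0)
    rcases h0.2.2 (Pseq n) (hPs n).1 (hm (Nat.zero_le n)) with h | h
    · exact h
    · exact absurd h (hPs n).2.1
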